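/- Let H be a Hopf algebra and A a partial H-module algebra. On the vector space A ⊗ H define (a⊗h)(b⊗k) := Σ a(h₍₁₎·b) ⊗ h₍₂₎k. Then this product is associative, and 1_A ⊗ 1_H is a left unit: (1_A⊗1_H)(b⊗k) = b⊗k for all b∈A, k∈H. -/
import Mathlib


open TensorProduct

/-- For fixed a : A and h : H, the bilinear map (b, g) ↦ Σ a(h₁·b) ⊗ h₂g with values in
A ⊗ H. -/
noncomputable def smashAux (k : Type*) {H A : Type*} [Field k] [Ring H] [HopfAlgebra k H]
    [Ring A] [Algebra k A] (act : H →ₗ[k] A →ₗ[k] A) (a : A) (h : H) :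
    A →ₗ[k] H →ₗ[k] A ⊗[k] H :=
  LinearMap.mk₂ k
    (fun b g => TensorProduct.map (LinearMap.mul k A a ∘ₗ act.flip b)
      ((LinearMap.mul k H).flip g) (Coalgebra.comul (R := k) h))
    (by
      intro b b' g
      simp only [map_add, LinearMap.comp_add, TensorProduct.map_add_left,
        LinearMap.add_apply])
    (by
      intro c b g
      simp only [map_smul, LinearMap.comp_smul, TensorProduct.map_smul_left,
        LinearMap.smul_apply])
    (by
      intro b g g'
      simp only [map_add, TensorProduct.map_add_right, LinearMap.add_apply])
    (by
      intro c b g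
      simp only [map_smul, TensorProduct.map_smul_right, LinearMap.smul_apply])

/-- The smash product multiplication on A ⊗ H determined by a partial H-action on A:
(a ⊗ h)(b ⊗ g) = Σ a(h₁·b) ⊗ h₂g, as a bilinear map. -/
noncomputable def smashMul (k : Type*) {H A : Type*} [Field k] [Ring H] [HopfAlgebra k H]
    [Ring A] [Algebra k A] (act : H →ₗ[k] A →ₗ[k] A) :
    A ⊗[k] H →ₗ[k] A ⊗[k] H →ₗ[k] A ⊗[k] H :=
  TensorProduct.lift
    (LinearMap.mk₂ k (fun a h => TensorProduct.lift (smashAux k act a h))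
      (by
        intro a a' h
        apply TensorProduct.ext'
        intro b g
        simp [smashAux, LinearMap.add_comp, TensorProduct.map_add_left, map_add])
      (by
        intro c a h
        apply TensorProduct.ext'
        intro b g
        simp [smashAux, LinearMap.smul_comp, TensorProduct.map_smul_left, map_smul])
      (by
        intro a h h'
        apply TensorProduct.ext'
        intro b g
        simp [smashAux, map_add])
      (by
        intro c a h
        apply TensorProduct.ext'
        intro b g
        simp [smashAux, map_smul]))

/-- The "Sweedler sum" Σ f(h₍₁₎) * g(h₍₂₎). -/
noncomputable def sw (k : Type*) {H A : Type*} [Field k]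
    [AddCommGroup H] [Module k H] [Ring A] [Algebra k A]
    (f g : H →ₗ[k] A) : H ⊗[k] H →ₗ[k] A :=
  TensorProduct.lift ((LinearMap.mul k A).compl₁₂ f g)

section Aux

variable {k H A : Type*} [Field k] [Ring H] [HopfAlgebra k H] [Ring A] [Algebra k A]
  (act : H →ₗ[k] A →ₗ[k] A)

theorem smashMul_tmul (a b : A) (h g : H) :
    smashMul k act (a ⊗ₜ[k] h) (b ⊗ₜ[k] g) =
      TensorProduct.map (LinearMap.mul k A a ∘ₗ act.flip b)
        ((LinearMap.mul k H).flip g) (Coalgebra.comul (R := k) h) := by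
  simp [smashMul, smashAux]

theorem sw_eq (f g : H →ₗ[k] A) :
    sw k f g = LinearMap.mul' k A ∘ₗ TensorProduct.map f g := by
  apply TensorProduct.ext'
  intro p q
  simp [sw, LinearMap.mul'_apply]

/-- Σ over comul g of a·(x·b)·((p u)·c) type maps. -/
noncomputable def FA2 (a b c : A) (u : H) : H ⊗[k] H →ₗ[k] A :=
  LinearMap.mulLeft k a ∘ₗ LinearMap.mul' k A ∘ₗ
    TensorProduct.map (act.flip b) (act.flip (act u c))

noncomputable def FA3 (a b c : A) (u : H) : H ⊗[k] (H ⊗[k] H) →ₗ[k] A :=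
  LinearMap.mulLeft k a ∘ₗ LinearMap.mul' k A ∘ₗ
    TensorProduct.map (act.flip b)
      (LinearMap.mul' k A ∘ₗ
        TensorProduct.map (act.flip 1) (act.flip c ∘ₗ LinearMap.mulRight k u))

noncomputable def FA4 (a b c : A) (u : H) : (H ⊗[k] H) ⊗[k] H →ₗ[k] A :=
  LinearMap.mulLeft k a ∘ₗ LinearMap.mul' k A ∘ₗ
    TensorProduct.map
      (LinearMap.mul' k A ∘ₗ TensorProduct.map (act.flip b) (act.flip 1))
      (act.flip c ∘ₗ LinearMap.mulRight k u)

noncomputable def FA5 (a b c : A) (u : H) : H ⊗[k] H →ₗ[k] A :=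
  LinearMap.mulLeft k a ∘ₗ LinearMap.mul' k A ∘ₗ
    TensorProduct.map (act.flip b) (act.flip c ∘ₗ LinearMap.mulRight k u)

noncomputable def Om (a b c : A) (l : H) (s : H ⊗[k] H) :
    H ⊗[k] (H ⊗[k] H) →ₗ[k] A ⊗[k] H :=
  LinearMap.mulLeft k (a ⊗ₜ[k] (1 : H)) ∘ₗ LinearMap.mul' k (A ⊗[k] H) ∘ₗ
    TensorProduct.map ((TensorProduct.mk k A H).flip 1 ∘ₗ act.flip b)
      (TensorProduct.map (act.flip c) (LinearMap.mulRight k l) ∘ₗ LinearMap.mulRight k s)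

theorem Om_tmul (a b c : A) (l : H) (s : H ⊗[k] H) (x : H) (r : H ⊗[k] H) :
    Om act a b c l s (x ⊗ₜ[k] r) =
      (a ⊗ₜ[k] (1 : H)) * (((act x b) ⊗ₜ[k] (1 : H)) *
        TensorProduct.map (act.flip c) (LinearMap.mulRight k l) (r * s)) := by
  simp [Om, LinearMap.mul'_apply]

theorem bridge (a : A) (x : H) (b c : A) (l : H) :
    TensorProduct.map (LinearMap.mul k A (a * act x b) ∘ₗ act.flip c)
        ((LinearMap.mul k H).flip l) =
      LinearMap.mulLeft k (a ⊗ₜ[k] (1 : H)) ∘ₗ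
        LinearMap.mulLeft k ((act x b) ⊗ₜ[k] (1 : H)) ∘ₗ
        TensorProduct.map (act.flip c) (LinearMap.mulRight k l) := by
  apply TensorProduct.ext'
  intro u v
  simp [Algebra.TensorProduct.tmul_mul_tmul, mul_assoc]

theorem partI (a b c : A) (g l : H) :
    ((smashMul k act).flip (c ⊗ₜ[k] l)) ∘ₗ
        TensorProduct.map (LinearMap.mul k A a ∘ₗ act.flip b) ((LinearMap.mul k H).flip g)
      = Om act a b c l (Coalgebra.comul g) ∘ₗ
          LinearMap.lTensor H (Coalgebra.comul (R := k)) := by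
  apply TensorProduct.ext'
  intro x y
  simp only [LinearMap.comp_apply, TensorProduct.map_tmul, LinearMap.flip_apply,
    LinearMap.lTensor_tmul, LinearMap.mul_apply']
  rw [smashMul_tmul, Bialgebra.comul_mul]
  rw [bridge act a x b c l]
  rw [Om_tmul]
  simp [LinearMap.mul'_apply]

theorem step1 (h2 : ∀ (h : H) (a b : A),
      act h (a * b) = sw k (act.flip a) (act.flip b) (Coalgebra.comul (R := k) h))
    (a b c : A) (u v l : H) :
    TensorProduct.map (LinearMap.mul k A a ∘ₗ act.flip (b * act u c))
        ((LinearMap.mul k H).flip (v * l)) =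
      TensorProduct.map (FA2 act a b c u) (LinearMap.mulRight k (v * l)) ∘ₗ
        LinearMap.rTensor H (Coalgebra.comul (R := k)) := by
  apply TensorProduct.ext'
  intro x y
  simp only [LinearMap.comp_apply, TensorProduct.map_tmul, LinearMap.flip_apply,
    LinearMap.rTensor_tmul, LinearMap.mul_apply', LinearMap.mulRight_apply]
  rw [h2 x b (act u c), sw_eq]
  simp [FA2]

theorem fa2_eq (h3 : ∀ (h g : H) (a : A),
      act h (act g a) = sw k (act.flip 1) (act.flip a ∘ₗ LinearMap.mulRight k g)
        (Coalgebra.comul (R := k) h))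
    (a b c : A) (u : H) :
    FA2 act a b c u =
      FA3 act a b c u ∘ₗ LinearMap.lTensor H (Coalgebra.comul (R := k)) := by
  apply TensorProduct.ext'
  intro p q
  simp only [LinearMap.comp_apply, LinearMap.lTensor_tmul, FA2, FA3,
    TensorProduct.map_tmul, LinearMap.flip_apply]
  rw [h3 q u c, sw_eq]
  simp

theorem fa3_assoc (a b c : A) (u : H) :
    FA3 act a b c u ∘ₗ (TensorProduct.assoc k H H H : (H ⊗[k] H) ⊗[k] H →ₗ[k] H ⊗[k] (H ⊗[k] H)) =
      FA4 act a b c u := by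
  apply TensorProduct.ext_threefold
  intro p β q
  simp [FA3, FA4, mul_assoc]

theorem fa4_eq (h2 : ∀ (h : H) (a b : A),
      act h (a * b) = sw k (act.flip a) (act.flip b) (Coalgebra.comul (R := k) h))
    (a b c : A) (u : H) :
    FA4 act a b c u ∘ₗ LinearMap.rTensor H (Coalgebra.comul (R := k)) =
      FA5 act a b c u := by
  apply TensorProduct.ext'
  intro p q
  simp only [LinearMap.comp_apply, LinearMap.rTensor_tmul, FA4, FA5,
    TensorProduct.map_tmul, LinearMap.flip_apply]
  have e := h2 p b 1
  rw [sw_eq, mul_one] at e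
  simp only [LinearMap.comp_apply] at e
  simp only [LinearMap.mulRight_apply]
  rw [← e]

theorem lift2 (h3 : ∀ (h g : H) (a : A),
      act h (act g a) = sw k (act.flip 1) (act.flip a ∘ₗ LinearMap.mulRight k g)
        (Coalgebra.comul (R := k) h))
    (a b c : A) (u w : H) :
    TensorProduct.map (FA2 act a b c u) (LinearMap.mulRight k w) =
      TensorProduct.map (FA3 act a b c u) (LinearMap.mulRight k w) ∘ₗ
        LinearMap.rTensor H ((Coalgebra.comul (R := k)).lTensor H) := by
  apply TensorProduct.ext'
  intro r y
  simp only [LinearMap.comp_apply, TensorProduct.map_tmul, LinearMap.rTensor_tmul]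
  rw [fa2_eq act h3 a b c u]
  simp

theorem lift3 (a b c : A) (u w : H) :
    TensorProduct.map (FA3 act a b c u) (LinearMap.mulRight k w) ∘ₗ
        LinearMap.rTensor H
          (TensorProduct.assoc k H H H : (H ⊗[k] H) ⊗[k] H →ₗ[k] H ⊗[k] (H ⊗[k] H)) =
      TensorProduct.map (FA4 act a b c u) (LinearMap.mulRight k w) := by
  apply TensorProduct.ext'
  intro r y
  simp only [LinearMap.comp_apply, TensorProduct.map_tmul, LinearMap.rTensor_tmul]
  rw [← fa3_assoc act a b c u]
  simp

theorem lift4 (h2 : ∀ (h : H) (a b : A),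
      act h (a * b) = sw k (act.flip a) (act.flip b) (Coalgebra.comul (R := k) h))
    (a b c : A) (u w : H) :
    TensorProduct.map (FA4 act a b c u) (LinearMap.mulRight k w) ∘ₗ
        LinearMap.rTensor H ((Coalgebra.comul (R := k)).rTensor H) =
      TensorProduct.map (FA5 act a b c u) (LinearMap.mulRight k w) := by
  apply TensorProduct.ext'
  intro r y
  simp only [LinearMap.comp_apply, TensorProduct.map_tmul, LinearMap.rTensor_tmul]
  rw [← fa4_eq act h2 a b c u]
  simp

theorem om_eq (a b c : A) (l u v : H) :
    Om act a b c l (u ⊗ₜ[k] v) ∘ₗ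
        (TensorProduct.assoc k H H H : (H ⊗[k] H) ⊗[k] H →ₗ[k] H ⊗[k] (H ⊗[k] H)) =
      TensorProduct.map (FA5 act a b c u) (LinearMap.mulRight k (v * l)) := by
  apply TensorProduct.ext_threefold
  intro x p q
  simp only [LinearMap.comp_apply, LinearEquiv.coe_coe, TensorProduct.assoc_tmul]
  rw [Om_tmul]
  simp [FA5, Algebra.TensorProduct.tmul_mul_tmul, mul_assoc]

theorem om_zero (a b c : A) (l : H) : Om act a b c l 0 = 0 := by
  apply TensorProduct.ext'
  intro x r
  simp [Om, LinearMap.mul'_apply]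

theorem om_add (a b c : A) (l : H) (s s' : H ⊗[k] H) :
    Om act a b c l (s + s') = Om act a b c l s + Om act a b c l s' := by
  apply TensorProduct.ext'
  intro x r
  simp [Om_tmul, mul_add]

theorem partII
    (h2 : ∀ (h : H) (a b : A),
      act h (a * b) = sw k (act.flip a) (act.flip b) (Coalgebra.comul (R := k) h))
    (h3 : ∀ (h g : H) (a : A),
      act h (act g a) = sw k (act.flip 1) (act.flip a ∘ₗ LinearMap.mulRight k g)
        (Coalgebra.comul (R := k) h))
    (a b c : A) (h l : H) (s : H ⊗[k] H) :
    Om act a b c l s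
        ((Coalgebra.comul (R := k)).lTensor H (Coalgebra.comul (R := k) h)) =
      smashMul k act (a ⊗ₜ[k] h)
        (TensorProduct.map (LinearMap.mul k A b ∘ₗ act.flip c)
          ((LinearMap.mul k H).flip l) s) := by
  induction s using TensorProduct.induction_on with
  | zero => simp [om_zero]
  | add s s' ih ih' => simp only [om_add, LinearMap.add_apply, map_add, ih, ih']
  | tmul u v =>
    simp only [TensorProduct.map_tmul, LinearMap.comp_apply, LinearMap.mul_apply',
      LinearMap.flip_apply]
    rw [smashMul_tmul]
    rw [step1 act h2 a b c u v l, LinearMap.comp_apply]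
    rw [lift2 act h3 a b c u (v * l), LinearMap.comp_apply]
    have jj : (Coalgebra.comul (R := k)).lTensor H ∘ₗ Coalgebra.comul =
        (TensorProduct.assoc k H H H : (H ⊗[k] H) ⊗[k] H →ₗ[k] H ⊗[k] (H ⊗[k] H)) ∘ₗ
          (Coalgebra.comul (R := k)).rTensor H ∘ₗ Coalgebra.comul :=
      Coalgebra.coassoc.symm
    have j := LinearMap.congr_fun
      (congrArg (fun f => LinearMap.rTensor H f) jj) (Coalgebra.comul (R := k) h)
    simp only [LinearMap.rTensor_comp, LinearMap.comp_apply] at j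
    rw [j]
    rw [← LinearMap.comp_apply (TensorProduct.map (FA3 act a b c u) _), lift3]
    rw [← LinearMap.comp_apply (TensorProduct.map (FA4 act a b c u) _), lift4 act h2]
    rw [← Coalgebra.coassoc_apply h]
    rw [← om_eq act a b c l u v]
    simp

theorem key
    (h2 : ∀ (h : H) (a b : A),
      act h (a * b) = sw k (act.flip a) (act.flip b) (Coalgebra.comul (R := k) h))
    (h3 : ∀ (h g : H) (a : A),
      act h (act g a) = sw k (act.flip 1) (act.flip a ∘ₗ LinearMap.mulRight k g)
        (Coalgebra.comul (R := k) h))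
    (a b c : A) (h g l : H) :
    smashMul k act (smashMul k act (a ⊗ₜ[k] h) (b ⊗ₜ[k] g)) (c ⊗ₜ[k] l) =
      smashMul k act (a ⊗ₜ[k] h) (smashMul k act (b ⊗ₜ[k] g) (c ⊗ₜ[k] l)) := by
  rw [smashMul_tmul act a b h g, smashMul_tmul act b c g l]
  have e := LinearMap.congr_fun (partI act a b c g l) (Coalgebra.comul (R := k) h)
  simp only [LinearMap.comp_apply, LinearMap.flip_apply] at e
  rw [e, partII act h2 h3 a b c h l (Coalgebra.comul (R := k) g)]

end Aux

/-- the smash product multiplication (a⊗h)(b⊗k) = Σ a(h₁·b) ⊗ h₂k on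
A ⊗ H coming from a partial H-module algebra A is associative, and 1_A ⊗ 1_H is a
left unit. -/
theorem stmt_15 {k H A : Type*} [Field k] [Ring H] [HopfAlgebra k H]
    [Ring A] [Algebra k A]
    (act : H →ₗ[k] A →ₗ[k] A)
    (h1 : ∀ a : A, act 1 a = a)
    (h2 : ∀ (h : H) (a b : A),
      act h (a * b) = sw k (act.flip a) (act.flip b) (Coalgebra.comul (R := k) h))
    (h3 : ∀ (h g : H) (a : A),
      act h (act g a) = sw k (act.flip 1) (act.flip a ∘ₗ LinearMap.mulRight k g)
        (Coalgebra.comul (R := k) h)) :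
    (∀ x y z : A ⊗[k] H,
      smashMul k act (smashMul k act x y) z = smashMul k act x (smashMul k act y z)) ∧
    (∀ (b : A) (g : H),
      smashMul k act ((1 : A) ⊗ₜ[k] (1 : H)) (b ⊗ₜ[k] g) = b ⊗ₜ[k] g) := by
  constructor
  · intro x y z
    induction x using TensorProduct.induction_on with
    | zero => simp
    | add x₁ x₂ ih₁ ih₂ => simp only [map_add, LinearMap.add_apply, ih₁, ih₂]
    | tmul a h =>
      induction y using TensorProduct.induction_on with
      | zero => simp
      | add y₁ y₂ ih₁ ih₂ => simp only [map_add, LinearMap.add_apply, ih₁, ih₂]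
      | tmul b g =>
        induction z using TensorProduct.induction_on with
        | zero => simp
        | add z₁ z₂ ih₁ ih₂ => simp only [map_add, ih₁, ih₂]
        | tmul c l => exact key act h2 h3 a b c h g l
  · intro b g
    rw [smashMul_tmul]
    simp [Algebra.TensorProduct.one_def, h1]
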